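/- arXiv:1905.04012 — 2 statements merged into one kernel-verified Lean document; each statement's English description precedes it below -/
import Mathlib

section
/- Let n ≥ 7 be an integer and l a real number with 2 ≤ l < n/2 − 1. Suppose u₀ ∈ H^{l+1}(ℝⁿ) ∩ L^{1,1}(ℝⁿ) and u₁ ∈ H^{l}(ℝⁿ) ∩ L^{1,1}(ℝⁿ). Then there exists a constant C > 0, depending only on n and l, such that for all t ≥ 1, ( ∫_{ℝⁿ} |û(t,ξ)|² dξ )^{1/2} ≤ C·I₀·t^{−(l+1)/2}. -/
/-! On the Fourier side the solution is `û₀ E₀ + (û₁ + û₀ / (2(1+|ξ|²))) E₁`.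
For `|ξ| ≤ 1` both multipliers are `O(e^{-t|ξ|²/8})` and `|û_j| ≤ ‖u_j‖_{1,1}`, so this region
contributes a Gaussian integral of size `t^{-n/2} ≤ t^{-(l+1)}`. For `|ξ| > 1` the multipliers
only decay like `e^{-t/(2(1+|ξ|²))}`, and `e^{-t/s} ≲ t^{-(l+1)} s^{l+1}` trades this decay for
`l + 1` powers of `1+|ξ|²`, which the `H^{l+1} × H^l` norms of the data absorb. -/

open MeasureTheory Real Set

noncomputable section

namespace DampedPlate

variable {n : ℕ}

/-- `ℝⁿ` as a Euclidean space. -/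
abbrev Rn (n : ℕ) := EuclideanSpace ℝ (Fin n)

/-- The Fourier transform `f̂(ξ) = ∫ f(x) e^{-i ξ·x} dx` of a real-valued function. -/
def ftr (f : Rn n → ℝ) (ξ : Rn n) : ℂ :=
  ∫ x : Rn n, (f x : ℂ) * Complex.exp (-Complex.I * ((inner ℝ ξ x : ℝ) : ℂ))

/-- The multiplier `E₀(t,ξ)`. -/
def E0 (ζ t : ℝ) (ξ : Rn n) : ℝ :=
  if ζ < ‖ξ‖ then
    Real.exp (-t / (2 * (1 + ‖ξ‖ ^ 2))) *
      Real.cos (t * Real.sqrt (4 * ‖ξ‖ ^ 2 * (1 + ‖ξ‖ ^ 2) ^ 2 - 1) / (2 * (1 + ‖ξ‖ ^ 2)))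
  else
    Real.exp (-t / (2 * (1 + ‖ξ‖ ^ 2))) *
      Real.cosh (t * Real.sqrt (1 - 4 * ‖ξ‖ ^ 2 * (1 + ‖ξ‖ ^ 2) ^ 2) / (2 * (1 + ‖ξ‖ ^ 2)))

/-- The multiplier `E₁(t,ξ)`. -/
def E1 (ζ t : ℝ) (ξ : Rn n) : ℝ :=
  if ζ < ‖ξ‖ then
    Real.exp (-t / (2 * (1 + ‖ξ‖ ^ 2))) *
      (Real.sin (t * Real.sqrt (4 * ‖ξ‖ ^ 2 * (1 + ‖ξ‖ ^ 2) ^ 2 - 1) / (2 * (1 + ‖ξ‖ ^ 2))) /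
        (Real.sqrt (4 * ‖ξ‖ ^ 2 * (1 + ‖ξ‖ ^ 2) ^ 2 - 1) / (2 * (1 + ‖ξ‖ ^ 2))))
  else
    Real.exp (-t / (2 * (1 + ‖ξ‖ ^ 2))) *
      (Real.sinh (t * Real.sqrt (1 - 4 * ‖ξ‖ ^ 2 * (1 + ‖ξ‖ ^ 2) ^ 2) / (2 * (1 + ‖ξ‖ ^ 2))) /
        (Real.sqrt (1 - 4 * ‖ξ‖ ^ 2 * (1 + ‖ξ‖ ^ 2) ^ 2) / (2 * (1 + ‖ξ‖ ^ 2))))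

/-- The Fourier transform of the solution, expressed in terms of the Fourier transforms
`v₀ = û₀`, `v₁ = û₁` of the initial data:
`û(t,ξ) = û₀(ξ)E₀(t,ξ) + (û₁(ξ) + û₀(ξ)/(2(1+|ξ|²))) E₁(t,ξ)`. -/
def uhatC (ζ : ℝ) (v₀ v₁ : Rn n → ℂ) (t : ℝ) (ξ : Rn n) : ℂ :=
  v₀ ξ * ((E0 ζ t ξ : ℝ) : ℂ) +
    (v₁ ξ + v₀ ξ * (((1 : ℝ) / (2 * (1 + ‖ξ‖ ^ 2)) : ℝ) : ℂ)) * ((E1 ζ t ξ : ℝ) : ℂ)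

/-- The Fourier transform of the solution of the damped plate equation with data `u₀, u₁`. -/
def uhat (ζ : ℝ) (u₀ u₁ : Rn n → ℝ) (t : ℝ) (ξ : Rn n) : ℂ :=
  uhatC ζ (ftr u₀) (ftr u₁) t ξ

/-- The wave-like profile
`û₁(ξ) e^{-t/(2|ξ|²)} sin(t|ξ|)/|ξ| + û₀(ξ) e^{-t/(2|ξ|²)} cos(t|ξ|)`,
in terms of the Fourier transforms of the data. -/
def waveC (v₀ v₁ : Rn n → ℂ) (t : ℝ) (ξ : Rn n) : ℂ :=
  v₁ ξ * ((Real.exp (-t / (2 * ‖ξ‖ ^ 2)) * (Real.sin (t * ‖ξ‖) / ‖ξ‖) : ℝ) : ℂ) +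
    v₀ ξ * ((Real.exp (-t / (2 * ‖ξ‖ ^ 2)) * Real.cos (t * ‖ξ‖) : ℝ) : ℂ)

/-- The wave-like profile for real data `u₀, u₁`. -/
def wave (u₀ u₁ : Rn n → ℝ) (t : ℝ) (ξ : Rn n) : ℂ := waveC (ftr u₀) (ftr u₁) t ξ

/-- Membership in `H^l`, expressed on the Fourier side. -/
def MemHC (l : ℝ) (v : Rn n → ℂ) : Prop :=
  Integrable fun ξ : Rn n => (1 + ‖ξ‖ ^ 2) ^ l * ‖v ξ‖ ^ 2

/-- The `H^l` norm, expressed on the Fourier side. -/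
def HNormC (l : ℝ) (v : Rn n → ℂ) : ℝ :=
  (∫ ξ : Rn n, (1 + ‖ξ‖ ^ 2) ^ l * ‖v ξ‖ ^ 2) ^ ((1 : ℝ) / 2)

/-- `f ∈ H^l(ℝⁿ)`. -/
def MemH (l : ℝ) (f : Rn n → ℝ) : Prop := MemHC l (ftr f)

/-- `‖f‖_{H^l}`. -/
def HNorm (l : ℝ) (f : Rn n → ℝ) : ℝ := HNormC l (ftr f)

/-- `‖f‖_{1,1} = ∫ (1+|x|)|f(x)| dx`. -/
def Norm11 (f : Rn n → ℝ) : ℝ := ∫ x : Rn n, (1 + ‖x‖) * |f x|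

/-- `f ∈ L^{1,1}(ℝⁿ)`. -/
def MemL11 (f : Rn n → ℝ) : Prop :=
  Integrable f ∧ Integrable fun x : Rn n => (1 + ‖x‖) * |f x|

/-- `P_j = ∫ u_j(x) dx`. -/
def Pint (f : Rn n → ℝ) : ℝ := ∫ x : Rn n, f x

/-- `I₀ = ‖u₁‖_{H^l} + ‖u₀‖_{H^{l+1}} + ‖u₁‖_{1,1} + ‖u₀‖_{1,1}`. -/
def I0 (l : ℝ) (u₀ u₁ : Rn n → ℝ) : ℝ :=
  HNorm l u₁ + HNorm (l + 1) u₀ + Norm11 u₁ + Norm11 u₀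

/-- The heat-like profile `(P₁ + P₀) e^{-t|ξ|²}`. -/
def heat (u₀ u₁ : Rn n → ℝ) (t : ℝ) (ξ : Rn n) : ℂ :=
  (((Pint u₁ + Pint u₀) * Real.exp (-t * ‖ξ‖ ^ 2) : ℝ) : ℂ)

/-- `ζ` is the unique number in `(0,1)` with `4ζ²(1+ζ²)² = 1`. -/
def zetaCond (ζ : ℝ) : Prop := 0 < ζ ∧ ζ < 1 ∧ 4 * ζ ^ 2 * (1 + ζ ^ 2) ^ 2 = 1

end DampedPlate

open DampedPlate

open scoped Nat

namespace Real

theorem sinh_le_mul_exp (x : ℝ) : sinh x ≤ x * exp x := by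
  have h : 1 - 2 * x ≤ exp (-(2 * x)) := by linarith [add_one_le_exp (-(2 * x))]
  have h' : exp x * exp (-(2 * x)) = exp (-x) := by rw [← exp_add]; ring_nf
  rw [sinh_eq]
  nlinarith [mul_le_mul_of_nonneg_left h (exp_pos x).le]

theorem cosh_le_exp {x : ℝ} (hx : 0 ≤ x) : cosh x ≤ exp x := by
  rw [cosh_eq]
  linarith [exp_le_exp.2 (show -x ≤ x by linarith)]

theorem sqrt_one_sub_le {h : ℝ} (h2 : h ≤ 2) : √(1 - h) ≤ 1 - h / 2 :=
  sqrt_le_iff.2 ⟨by linarith, by nlinarith [sq_nonneg h]⟩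

theorem mul_exp_neg_mul_le {c : ℝ} (hc : 0 < c) (t : ℝ) : t * exp (-(c * t)) ≤ 1 / c := by
  rw [le_div_iff₀ hc, exp_neg, mul_right_comm, mul_comm t c, ← div_eq_mul_inv,
    div_le_one (exp_pos _)]
  linarith [add_one_le_exp (c * t)]

theorem abs_sin_mul_div_le {t : ℝ} (ht : 0 ≤ t) (a : ℝ) : |sin (t * a) / a| ≤ t := by
  rcases eq_or_ne a 0 with rfl | ha
  · simpa using ht
  rw [abs_div, div_le_iff₀ (abs_pos.2 ha)]
  calc |sin (t * a)| ≤ |t * a| := abs_sin_le_abs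
    _ = t * |a| := by rw [abs_mul, abs_of_nonneg ht]

theorem rpow_le_factorial_mul_exp {p u : ℝ} (hp : 0 ≤ p) (hu : 0 ≤ u) :
    u ^ p ≤ (⌈p⌉₊)! * exp u := by
  have hfac : (1 : ℝ) ≤ (⌈p⌉₊)! := Nat.one_le_cast.2 (Nat.factorial_pos _)
  rcases le_total u 1 with hu1 | hu1
  · calc u ^ p ≤ 1 := rpow_le_one hu hu1 hp
      _ ≤ (⌈p⌉₊)! * exp u := one_le_mul_of_one_le_of_one_le hfac (one_le_exp hu)
  · calc u ^ p ≤ u ^ (⌈p⌉₊ : ℝ) := rpow_le_rpow_of_exponent_le hu1 (Nat.le_ceil p)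
      _ = u ^ ⌈p⌉₊ := rpow_natCast u _
      _ ≤ (⌈p⌉₊)! * exp u := by
        rw [← div_le_iff₀' (by positivity)]
        exact pow_div_factorial_le_exp _ hu _

theorem exp_neg_div_le {p t s : ℝ} (hp : 0 ≤ p) (ht : 0 < t) (hs : 0 < s) :
    exp (-(t / s)) ≤ (⌈p⌉₊)! * t ^ (-p) * s ^ p := by
  have h := rpow_le_factorial_mul_exp hp (div_pos ht hs).le
  rw [div_rpow ht.le hs.le, div_le_iff₀ (rpow_pos_of_pos hs p)] at h
  rw [exp_neg, rpow_neg ht.le, inv_le_iff_one_le_mul₀ (exp_pos _),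
    show (⌈p⌉₊)! * (t ^ p)⁻¹ * s ^ p * exp (t / s) = (⌈p⌉₊)! * exp (t / s) * s ^ p / t ^ p by ring,
    one_le_div (rpow_pos_of_pos ht p)]
  exact h

theorem rpow_one_half_le_of_le_mul_sq_mul_rpow {X C I t q : ℝ} (hI : 0 ≤ I)
    (ht : 0 < t) (h : X ≤ C * I ^ 2 * t ^ (-q)) :
    X ^ (1 / 2 : ℝ) ≤ √C * I * t ^ (-(q / 2)) := by
  rw [← sqrt_eq_rpow]
  calc √X ≤ √(C * I ^ 2 * t ^ (-q)) := sqrt_le_sqrt h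
    _ = √C * I * t ^ (-(q / 2)) := by
      rw [sqrt_mul' _ (rpow_nonneg ht.le _), sqrt_mul' _ (sq_nonneg I), sqrt_sq hI,
        sqrt_eq_rpow (t ^ _), ← rpow_mul ht.le]
      ring_nf

end Real

namespace DampedPlate

variable {n : ℕ} {ζ t l : ℝ} {ξ : Rn n} {v₀ v₁ : Rn n → ℂ}

-- The characteristic roots of the symbol `(1+r²)λ² + λ + r²(1+r²)` are
-- `(-1 ± √(1 - 4r²(1+r²)²)) / (2(1+r²))`: real for `r ≤ ζ`, complex for `r > ζ`.
def hypRate (r : ℝ) : ℝ := √(1 - 4 * r ^ 2 * (1 + r ^ 2) ^ 2) / (2 * (1 + r ^ 2))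

def oscFreq (r : ℝ) : ℝ := √(4 * r ^ 2 * (1 + r ^ 2) ^ 2 - 1) / (2 * (1 + r ^ 2))

theorem hypRate_nonneg (r : ℝ) : 0 ≤ hypRate r := by
  unfold hypRate; positivity

theorem E0_of_lt (h : ζ < ‖ξ‖) :
    E0 ζ t ξ = exp (-t / (2 * (1 + ‖ξ‖ ^ 2))) * cos (t * oscFreq ‖ξ‖) := by
  rw [E0, if_pos h, oscFreq, mul_div_assoc]

theorem E0_of_le (h : ‖ξ‖ ≤ ζ) :
    E0 ζ t ξ = exp (-t / (2 * (1 + ‖ξ‖ ^ 2))) * cosh (t * hypRate ‖ξ‖) := by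
  rw [E0, if_neg h.not_gt, hypRate, mul_div_assoc]

theorem E1_of_lt (h : ζ < ‖ξ‖) :
    E1 ζ t ξ = exp (-t / (2 * (1 + ‖ξ‖ ^ 2))) * (sin (t * oscFreq ‖ξ‖) / oscFreq ‖ξ‖) := by
  rw [E1, if_pos h, oscFreq, mul_div_assoc]

theorem E1_of_le (h : ‖ξ‖ ≤ ζ) :
    E1 ζ t ξ = exp (-t / (2 * (1 + ‖ξ‖ ^ 2))) * (sinh (t * hypRate ‖ξ‖) / hypRate ‖ξ‖) := by
  rw [E1, if_neg h.not_gt, hypRate, mul_div_assoc]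

theorem four_mul_sq_mul_sq_le {ζ r c : ℝ} (hζ : 4 * ζ ^ 2 * (1 + ζ ^ 2) ^ 2 = 1)
    (hr : 0 ≤ r) (hc0 : 0 ≤ c) (hc : c ≤ 1) (hrc : r ≤ c * ζ) :
    4 * r ^ 2 * (1 + r ^ 2) ^ 2 ≤ c ^ 2 := by
  have hr2 : r ^ 2 ≤ c ^ 2 * ζ ^ 2 := by rw [← mul_pow]; exact pow_le_pow_left₀ hr hrc 2
  have hc2 : c ^ 2 ≤ 1 := pow_le_one₀ hc0 hc
  have hs : (1 + r ^ 2) ^ 2 ≤ (1 + ζ ^ 2) ^ 2 :=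
    pow_le_pow_left₀ (by positivity) (by nlinarith [sq_nonneg ζ]) 2
  calc 4 * r ^ 2 * (1 + r ^ 2) ^ 2 ≤ 4 * (c ^ 2 * ζ ^ 2) * (1 + ζ ^ 2) ^ 2 := by gcongr
    _ = c ^ 2 := by linear_combination c ^ 2 * hζ

theorem exp_neg_div_mul_exp_hypRate_le {t r : ℝ} (ht : 0 ≤ t)
    (hr : 4 * r ^ 2 * (1 + r ^ 2) ^ 2 ≤ 2) :
    exp (-t / (2 * (1 + r ^ 2))) * exp (t * hypRate r) ≤ exp (-(t * r ^ 2)) := by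
  have hsqrt := sqrt_one_sub_le hr
  rw [← exp_add, exp_le_exp, hypRate, mul_div_assoc', ← add_div, div_le_iff₀ (by positivity)]
  nlinarith [mul_le_mul_of_nonneg_left hsqrt ht, mul_nonneg (mul_nonneg ht (sq_nonneg r))
    (mul_nonneg (sq_nonneg r) (by positivity : (0:ℝ) ≤ 1 + r ^ 2))]

theorem exp_neg_div_le_exp_neg_quarter {t r : ℝ} (ht : 0 ≤ t) (hr : r ^ 2 ≤ 1) :
    exp (-t / (2 * (1 + r ^ 2))) ≤ exp (-(t / 4)) := by
  rw [exp_le_exp, neg_div, neg_le_neg_iff]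
  exact div_le_div_of_nonneg_left ht (by positivity) (by linarith)

theorem one_div_eight_le_hypRate {r : ℝ} (hr : 4 * r ^ 2 * (1 + r ^ 2) ^ 2 ≤ (1 / 2) ^ 2) :
    1 / 8 ≤ hypRate r := by
  have hr2 : r ^ 2 ≤ 1 := by nlinarith [sq_nonneg r, sq_nonneg (r ^ 2)]
  have h : 1 / 2 ≤ √(1 - 4 * r ^ 2 * (1 + r ^ 2) ^ 2) :=
    le_sqrt_of_sq_le (by linarith)
  rw [hypRate, le_div_iff₀ (by positivity)]
  linarith

theorem sqrt_one_add_sq_div_two_le_oscFreq {r : ℝ} (hr : 1 < r) :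
    √(1 + r ^ 2) / 2 ≤ oscFreq r := by
  have hs : 0 < 1 + r ^ 2 := by positivity
  have h2 : 2 < 1 + r ^ 2 := by nlinarith
  have hX : (1 + r ^ 2) ^ 2 * (1 + r ^ 2) ≤ 4 * r ^ 2 * (1 + r ^ 2) ^ 2 - 1 := by
    nlinarith [mul_le_mul (show 4 ≤ (1 + r ^ 2) ^ 2 by nlinarith)
      (show 2 ≤ 3 * r ^ 2 - 1 by nlinarith) (by norm_num) (by positivity)]
  have h := sqrt_le_sqrt hX
  rw [sqrt_mul (by positivity), sqrt_sq hs.le] at h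
  rw [oscFreq, div_le_div_iff₀ (by norm_num) (by positivity)]
  nlinarith [sqrt_nonneg (1 + r ^ 2)]

theorem four_mul_sq_mul_sq_le_one (hζ : 4 * ζ ^ 2 * (1 + ζ ^ 2) ^ 2 = 1) (h : ‖ξ‖ ≤ ζ) :
    4 * ‖ξ‖ ^ 2 * (1 + ‖ξ‖ ^ 2) ^ 2 ≤ 1 := by
  simpa using four_mul_sq_mul_sq_le hζ (norm_nonneg ξ) zero_le_one le_rfl (by simpa using h)

theorem abs_E0_le_of_norm_le_one (hζ : 4 * ζ ^ 2 * (1 + ζ ^ 2) ^ 2 = 1) (ht : 0 ≤ t)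
    (hr : ‖ξ‖ ≤ 1) : |E0 ζ t ξ| ≤ exp (-(t / 8) * ‖ξ‖ ^ 2) := by
  have hr2 : ‖ξ‖ ^ 2 ≤ 1 := pow_le_one₀ (norm_nonneg ξ) hr
  rcases lt_or_ge ζ ‖ξ‖ with h | h
  · rw [E0_of_lt h, abs_mul, abs_of_pos (exp_pos _)]
    calc _ ≤ exp (-t / (2 * (1 + ‖ξ‖ ^ 2))) * 1 := by gcongr; exact abs_cos_le_one _
      _ ≤ exp (-(t / 4)) := by rw [mul_one]; exact exp_neg_div_le_exp_neg_quarter ht hr2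
      _ ≤ _ := exp_le_exp.2 (by nlinarith)
  · have hdisc := four_mul_sq_mul_sq_le_one hζ h
    rw [E0_of_le h, abs_of_nonneg (by positivity)]
    calc _ ≤ exp (-t / (2 * (1 + ‖ξ‖ ^ 2))) * exp (t * hypRate ‖ξ‖) := by
          gcongr; exact cosh_le_exp (mul_nonneg ht (hypRate_nonneg _))
      _ ≤ exp (-(t * ‖ξ‖ ^ 2)) := exp_neg_div_mul_exp_hypRate_le ht (by linarith)
      _ ≤ _ := exp_le_exp.2 (by nlinarith [mul_nonneg ht (sq_nonneg ‖ξ‖)])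

theorem abs_E1_le_of_le_zeta (hζ : 4 * ζ ^ 2 * (1 + ζ ^ 2) ^ 2 = 1) (ht : 0 ≤ t)
    (h : ‖ξ‖ ≤ ζ) {M : ℝ}
    (hM : sinh (t * hypRate ‖ξ‖) / hypRate ‖ξ‖ ≤ M * exp (t * hypRate ‖ξ‖)) :
    |E1 ζ t ξ| ≤ M * exp (-(t * ‖ξ‖ ^ 2)) := by
  have hdisc := four_mul_sq_mul_sq_le_one hζ h
  have hμ := hypRate_nonneg ‖ξ‖
  have hsinh : 0 ≤ sinh (t * hypRate ‖ξ‖) := sinh_nonneg_iff.2 (mul_nonneg ht hμ)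
  have hM0 : 0 ≤ M := nonneg_of_mul_nonneg_left ((div_nonneg hsinh hμ).trans hM) (exp_pos _)
  rw [E1_of_le h, abs_of_nonneg (by positivity)]
  calc _ ≤ exp (-t / (2 * (1 + ‖ξ‖ ^ 2))) * (M * exp (t * hypRate ‖ξ‖)) := by gcongr
    _ = M * (exp (-t / (2 * (1 + ‖ξ‖ ^ 2))) * exp (t * hypRate ‖ξ‖)) := by ring
    _ ≤ M * exp (-(t * ‖ξ‖ ^ 2)) := by
      gcongr; exact exp_neg_div_mul_exp_hypRate_le ht (by linarith)

theorem abs_E1_le_mul_exp (hζ : 4 * ζ ^ 2 * (1 + ζ ^ 2) ^ 2 = 1) (ht : 0 ≤ t) (h : ‖ξ‖ ≤ ζ) :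
    |E1 ζ t ξ| ≤ t * exp (-(t * ‖ξ‖ ^ 2)) := by
  refine abs_E1_le_of_le_zeta hζ ht h ?_
  rcases (hypRate_nonneg ‖ξ‖).eq_or_lt with h0 | h0
  · rw [← h0, div_zero]; positivity
  · rw [div_le_iff₀ h0]
    linarith [sinh_le_mul_exp (t * hypRate ‖ξ‖)]

-- Away from the threshold `ζ` the rate is bounded below, which removes the factor `t` above.
theorem abs_E1_le_four_mul_exp (hζ : 4 * ζ ^ 2 * (1 + ζ ^ 2) ^ 2 = 1) (ht : 0 ≤ t)
    (h : ‖ξ‖ ≤ ζ / 2) : |E1 ζ t ξ| ≤ 4 * exp (-(t * ‖ξ‖ ^ 2)) := by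
  have hμ : 1 / 8 ≤ hypRate ‖ξ‖ := one_div_eight_le_hypRate
    (four_mul_sq_mul_sq_le hζ (norm_nonneg ξ) (by norm_num) (by norm_num) (by linarith))
  refine abs_E1_le_of_le_zeta hζ ht (by linarith [norm_nonneg ξ]) ?_
  rw [div_le_iff₀ (by linarith), sinh_eq]
  nlinarith [exp_pos (t * hypRate ‖ξ‖), exp_pos (-(t * hypRate ‖ξ‖))]

theorem abs_E1_le_of_norm_le_one (hζ : zetaCond ζ) (ht : 0 ≤ t) (hr : ‖ξ‖ ≤ 1) :
    |E1 ζ t ξ| ≤ 8 / ζ ^ 2 * exp (-(t / 8) * ‖ξ‖ ^ 2) := by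
  obtain ⟨hζ0, hζ1, hζe⟩ := hζ
  have hr2 : ‖ξ‖ ^ 2 ≤ 1 := pow_le_one₀ (norm_nonneg ξ) hr
  have h8 : 8 ≤ 8 / ζ ^ 2 := by
    rw [le_div_iff₀ (by positivity)]; nlinarith [pow_le_one₀ hζ0.le hζ1.le (n := 2)]
  rcases lt_or_ge ζ ‖ξ‖ with h | h
  · rw [E1_of_lt h, abs_mul, abs_of_pos (exp_pos _)]
    have htexp : t * exp (-(1 / 8 * t)) ≤ 8 := by
      simpa using mul_exp_neg_mul_le (c := 1 / 8) (by norm_num) t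
    calc _ ≤ exp (-(t / 4)) * t :=
          mul_le_mul (exp_neg_div_le_exp_neg_quarter ht hr2) (abs_sin_mul_div_le ht _)
            (abs_nonneg _) (exp_pos _).le
      _ = t * exp (-(1 / 8 * t)) * exp (-(t / 8)) := by rw [mul_assoc, ← exp_add]; ring_nf
      _ ≤ 8 / ζ ^ 2 * exp (-(t / 8) * ‖ξ‖ ^ 2) :=
          mul_le_mul (htexp.trans h8) (exp_le_exp.2 (by nlinarith)) (exp_pos _).le (by positivity)
  rcases le_total ‖ξ‖ (ζ / 2) with hsmall | hbig
  · calc _ ≤ 4 * exp (-(t * ‖ξ‖ ^ 2)) := abs_E1_le_four_mul_exp hζe ht hsmall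
      _ ≤ 8 / ζ ^ 2 * exp (-(t / 8) * ‖ξ‖ ^ 2) :=
        mul_le_mul (by linarith) (exp_le_exp.2 (by nlinarith [mul_nonneg ht (sq_nonneg ‖ξ‖)]))
          (exp_pos _).le (by positivity)
  have hc : 0 < 7 * ζ ^ 2 / 32 := by positivity
  have hζr : 7 * ζ ^ 2 / 32 * t ≤ 7 / 8 * (t * ‖ξ‖ ^ 2) := by
    nlinarith [mul_le_mul_of_nonneg_left (pow_le_pow_left₀ (by positivity) hbig 2) ht]
  calc _ ≤ t * exp (-(t * ‖ξ‖ ^ 2)) := abs_E1_le_mul_exp hζe ht h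
    _ = t * exp (-(7 / 8 * (t * ‖ξ‖ ^ 2))) * exp (-(t / 8) * ‖ξ‖ ^ 2) := by
      rw [mul_assoc, ← exp_add]; ring_nf
    _ ≤ t * exp (-(7 * ζ ^ 2 / 32 * t)) * exp (-(t / 8) * ‖ξ‖ ^ 2) := by gcongr
    _ ≤ 1 / (7 * ζ ^ 2 / 32) * exp (-(t / 8) * ‖ξ‖ ^ 2) := by
      gcongr; exact mul_exp_neg_mul_le hc t
    _ ≤ 8 / ζ ^ 2 * exp (-(t / 8) * ‖ξ‖ ^ 2) := by
      refine mul_le_mul_of_nonneg_right ?_ (exp_pos _).le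
      rw [div_le_div_iff₀ hc (by positivity)]
      nlinarith

theorem abs_E0_le_of_lt (h : ζ < ‖ξ‖) : |E0 ζ t ξ| ≤ exp (-t / (2 * (1 + ‖ξ‖ ^ 2))) := by
  rw [E0_of_lt h, abs_mul, abs_of_pos (exp_pos _)]
  exact mul_le_of_le_one_right (exp_pos _).le (abs_cos_le_one _)

theorem abs_E1_le_of_one_lt (hζ : ζ < 1) (h : 1 < ‖ξ‖) :
    |E1 ζ t ξ| ≤ 2 / √(1 + ‖ξ‖ ^ 2) * exp (-t / (2 * (1 + ‖ξ‖ ^ 2))) := by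
  have hω := sqrt_one_add_sq_div_two_le_oscFreq h
  have hω0 : 0 < oscFreq ‖ξ‖ := lt_of_lt_of_le (by positivity) hω
  rw [E1_of_lt (hζ.trans h), abs_mul, abs_of_pos (exp_pos _), mul_comm]
  gcongr
  calc |sin (t * oscFreq ‖ξ‖) / oscFreq ‖ξ‖| ≤ 1 / oscFreq ‖ξ‖ := by
        rw [abs_div, abs_of_pos hω0]; gcongr; exact abs_sin_le_one _
    _ ≤ 2 / √(1 + ‖ξ‖ ^ 2) := by
        rw [div_le_div_iff₀ hω0 (by positivity)]; linarith

theorem norm_uhatC_le :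
    ‖uhatC ζ v₀ v₁ t ξ‖ ≤ ‖v₀ ξ‖ * |E0 ζ t ξ| + (‖v₁ ξ‖ + ‖v₀ ξ‖ / 2) * |E1 ζ t ξ| := by
  have hc : ‖(((1 : ℝ) / (2 * (1 + ‖ξ‖ ^ 2)) : ℝ) : ℂ)‖ ≤ 1 / 2 := by
    rw [Complex.norm_real, norm_of_nonneg (by positivity)]
    gcongr; nlinarith [sq_nonneg ‖ξ‖]
  rw [uhatC]
  refine (norm_add_le _ _).trans ?_
  simp only [norm_mul, Complex.norm_real, norm_eq_abs]
  gcongr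
  calc _ ≤ ‖v₁ ξ‖ + ‖v₀ ξ * (((1 : ℝ) / (2 * (1 + ‖ξ‖ ^ 2)) : ℝ) : ℂ)‖ := norm_add_le _ _
    _ ≤ ‖v₁ ξ‖ + ‖v₀ ξ‖ / 2 := by
      rw [norm_mul]
      linarith [mul_le_mul_of_nonneg_left hc (norm_nonneg (v₀ ξ))]

theorem norm_uhatC_sq_le_of_norm_le_one (hζ : zetaCond ζ) (ht : 0 ≤ t) (hr : ‖ξ‖ ≤ 1) :
    ‖uhatC ζ v₀ v₁ t ξ‖ ^ 2 ≤
      4 * (8 / ζ ^ 2) ^ 2 * (‖v₀ ξ‖ + ‖v₁ ξ‖) ^ 2 * exp (-(t / 4) * ‖ξ‖ ^ 2) := by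
  set e := exp (-(t / 8) * ‖ξ‖ ^ 2)
  have h8 : 1 ≤ 8 / ζ ^ 2 := by
    rw [le_div_iff₀ (pow_pos hζ.1 2), one_mul]
    nlinarith [pow_le_one₀ hζ.1.le hζ.2.1.le (n := 2)]
  have hE0 : |E0 ζ t ξ| ≤ 8 / ζ ^ 2 * e :=
    (abs_E0_le_of_norm_le_one hζ.2.2 ht hr).trans (le_mul_of_one_le_left (exp_pos _).le h8)
  have hE1 := abs_E1_le_of_norm_le_one hζ ht hr
  have hnorm : ‖uhatC ζ v₀ v₁ t ξ‖ ≤ 2 * (8 / ζ ^ 2 * e) * (‖v₀ ξ‖ + ‖v₁ ξ‖) := by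
    refine norm_uhatC_le.trans ?_
    have := mul_le_mul_of_nonneg_left hE0 (norm_nonneg (v₀ ξ))
    have := mul_le_mul_of_nonneg_left hE1 (by positivity : 0 ≤ ‖v₁ ξ‖ + ‖v₀ ξ‖ / 2)
    nlinarith [norm_nonneg (v₀ ξ), norm_nonneg (v₁ ξ), (by positivity : 0 ≤ 8 / ζ ^ 2 * e)]
  calc _ ≤ (2 * (8 / ζ ^ 2 * e) * (‖v₀ ξ‖ + ‖v₁ ξ‖)) ^ 2 := by gcongr
    _ = 4 * (8 / ζ ^ 2) ^ 2 * (‖v₀ ξ‖ + ‖v₁ ξ‖) ^ 2 * exp (-(t / 4) * ‖ξ‖ ^ 2) := by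
      rw [mul_pow, mul_pow, mul_pow, ← exp_nat_mul]; ring_nf

theorem norm_uhatC_sq_le_of_one_lt (hζ : ζ < 1) (hr : 1 < ‖ξ‖) :
    ‖uhatC ζ v₀ v₁ t ξ‖ ^ 2 ≤
      8 * exp (-(t / (1 + ‖ξ‖ ^ 2))) * (‖v₀ ξ‖ ^ 2 + ‖v₁ ξ‖ ^ 2 / (1 + ‖ξ‖ ^ 2)) := by
  have hs : 1 ≤ √(1 + ‖ξ‖ ^ 2) := one_le_sqrt.2 (by nlinarith)
  have hX : exp (-t / (2 * (1 + ‖ξ‖ ^ 2))) ^ 2 = exp (-(t / (1 + ‖ξ‖ ^ 2))) := by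
    rw [← exp_nat_mul]; congr 1; field_simp; ring
  have hy : (‖v₁ ξ‖ / √(1 + ‖ξ‖ ^ 2)) ^ 2 = ‖v₁ ξ‖ ^ 2 / (1 + ‖ξ‖ ^ 2) := by
    rw [div_pow, sq_sqrt (by positivity)]
  have hv : ‖v₀ ξ‖ / √(1 + ‖ξ‖ ^ 2) ≤ ‖v₀ ξ‖ := div_le_self (norm_nonneg _) hs
  have hnorm : ‖uhatC ζ v₀ v₁ t ξ‖ ≤
      exp (-t / (2 * (1 + ‖ξ‖ ^ 2))) * (2 * ‖v₀ ξ‖ + 2 * (‖v₁ ξ‖ / √(1 + ‖ξ‖ ^ 2))) := by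
    refine norm_uhatC_le.trans ?_
    have h0 := mul_le_mul_of_nonneg_left (abs_E0_le_of_lt (t := t) (hζ.trans hr))
      (norm_nonneg (v₀ ξ))
    have h1 := mul_le_mul_of_nonneg_left (abs_E1_le_of_one_lt (t := t) hζ hr)
      (by positivity : 0 ≤ ‖v₁ ξ‖ + ‖v₀ ξ‖ / 2)
    calc _ ≤ _ := add_le_add h0 h1
      _ = exp (-t / (2 * (1 + ‖ξ‖ ^ 2))) *
          (‖v₀ ξ‖ + ‖v₀ ξ‖ / √(1 + ‖ξ‖ ^ 2) + 2 * (‖v₁ ξ‖ / √(1 + ‖ξ‖ ^ 2))) := by ring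
      _ ≤ _ := by gcongr; linarith
  calc _ ≤ (exp (-t / (2 * (1 + ‖ξ‖ ^ 2))) *
        (2 * ‖v₀ ξ‖ + 2 * (‖v₁ ξ‖ / √(1 + ‖ξ‖ ^ 2)))) ^ 2 := by gcongr
    _ ≤ exp (-t / (2 * (1 + ‖ξ‖ ^ 2))) ^ 2 *
        (8 * (‖v₀ ξ‖ ^ 2 + (‖v₁ ξ‖ / √(1 + ‖ξ‖ ^ 2)) ^ 2)) := by
      rw [mul_pow]; gcongr; nlinarith [sq_nonneg (‖v₀ ξ‖ - ‖v₁ ξ‖ / √(1 + ‖ξ‖ ^ 2))]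
    _ = _ := by rw [hX, hy]; ring

theorem norm_uhatC_sq_le (hζ : zetaCond ζ) (hl : -1 ≤ l) (ht : 0 < t) (ξ : Rn n) :
    ‖uhatC ζ v₀ v₁ t ξ‖ ^ 2 ≤
      4 * (8 / ζ ^ 2) ^ 2 * (‖v₀ ξ‖ + ‖v₁ ξ‖) ^ 2 * exp (-(t / 4) * ‖ξ‖ ^ 2) +
        8 * (⌈l + 1⌉₊)! * t ^ (-(l + 1)) *
          ((1 + ‖ξ‖ ^ 2) ^ (l + 1) * ‖v₀ ξ‖ ^ 2 + (1 + ‖ξ‖ ^ 2) ^ l * ‖v₁ ξ‖ ^ 2) := by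
  rcases le_or_gt ‖ξ‖ 1 with hr | hr
  · exact (norm_uhatC_sq_le_of_norm_le_one hζ ht.le hr).trans
      (le_add_of_nonneg_right (by positivity))
  refine (norm_uhatC_sq_le_of_one_lt hζ.2.1 hr).trans
    ((le_add_of_nonneg_left (by positivity)).trans' ?_)
  have hs : 0 < 1 + ‖ξ‖ ^ 2 := by positivity
  calc _ ≤ 8 * ((⌈l + 1⌉₊)! * t ^ (-(l + 1)) * (1 + ‖ξ‖ ^ 2) ^ (l + 1)) *
        (‖v₀ ξ‖ ^ 2 + ‖v₁ ξ‖ ^ 2 / (1 + ‖ξ‖ ^ 2)) := by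
        gcongr; exact exp_neg_div_le (by linarith) ht hs
    _ = _ := by rw [rpow_add hs, rpow_one]; field_simp

theorem integral_exp_neg_mul_sq_norm_le {p : ℝ} (ht : 1 ≤ t) (hp : p ≤ n / 2) :
    ∫ ξ : Rn n, exp (-(t / 4) * ‖ξ‖ ^ 2) ≤ (4 * π) ^ ((n : ℝ) / 2) * t ^ (-p) := by
  have ht0 : 0 < t := by linarith
  rw [GaussianFourier.integral_rexp_neg_mul_sq_norm (by positivity), finrank_euclideanSpace_fin,
    show π / (t / 4) = 4 * π / t by field_simp, div_rpow (by positivity) ht0.le, div_eq_mul_inv,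
    ← rpow_neg ht0.le]
  gcongr

theorem sq_HNormC (l : ℝ) (v : Rn n → ℂ) :
    HNormC l v ^ 2 = ∫ ξ, (1 + ‖ξ‖ ^ 2) ^ l * ‖v ξ‖ ^ 2 := by
  rw [HNormC, ← sqrt_eq_rpow, sq_sqrt (integral_nonneg fun _ => by positivity)]

theorem integral_norm_uhatC_sq_le (hζ : zetaCond ζ) (hl : -1 ≤ l) (hln : l + 1 ≤ n / 2)
    (hv₀ : MemHC (l + 1) v₀) (hv₁ : MemHC l v₁) {N₀ N₁ : ℝ}
    (hN₀ : ∀ ξ, ‖v₀ ξ‖ ≤ N₀) (hN₁ : ∀ ξ, ‖v₁ ξ‖ ≤ N₁) (ht : 1 ≤ t) :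
    ∫ ξ, ‖uhatC ζ v₀ v₁ t ξ‖ ^ 2 ≤
      (4 * (8 / ζ ^ 2) ^ 2 * (4 * π) ^ ((n : ℝ) / 2) * (N₀ + N₁) ^ 2 +
        8 * (⌈l + 1⌉₊)! * (HNormC (l + 1) v₀ ^ 2 + HNormC l v₁ ^ 2)) * t ^ (-(l + 1)) := by
  have ht0 : 0 < t := by linarith
  have hgauss : Integrable fun ξ : Rn n => exp (-(t / 4) * ‖ξ‖ ^ 2) := by
    refine Integrable.of_integral_ne_zero (ne_of_gt ?_)
    rw [GaussianFourier.integral_rexp_neg_mul_sq_norm (by positivity)]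
    positivity
  have hw : Integrable fun ξ : Rn n =>
      (1 + ‖ξ‖ ^ 2) ^ (l + 1) * ‖v₀ ξ‖ ^ 2 + (1 + ‖ξ‖ ^ 2) ^ l * ‖v₁ ξ‖ ^ 2 := hv₀.add hv₁
  calc ∫ ξ, ‖uhatC ζ v₀ v₁ t ξ‖ ^ 2
      ≤ ∫ ξ, (4 * (8 / ζ ^ 2) ^ 2 * (N₀ + N₁) ^ 2 * exp (-(t / 4) * ‖ξ‖ ^ 2) +
          8 * (⌈l + 1⌉₊)! * t ^ (-(l + 1)) *
            ((1 + ‖ξ‖ ^ 2) ^ (l + 1) * ‖v₀ ξ‖ ^ 2 + (1 + ‖ξ‖ ^ 2) ^ l * ‖v₁ ξ‖ ^ 2)) := by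
        refine integral_mono_of_nonneg (ae_of_all _ fun _ => by positivity)
          ((hgauss.const_mul _).add (hw.const_mul _)) (ae_of_all _ fun ξ => ?_)
        refine (norm_uhatC_sq_le hζ hl ht0 ξ).trans ?_
        have := add_le_add (hN₀ ξ) (hN₁ ξ)
        beta_reduce
        gcongr
    _ = 4 * (8 / ζ ^ 2) ^ 2 * (N₀ + N₁) ^ 2 * (∫ ξ : Rn n, exp (-(t / 4) * ‖ξ‖ ^ 2)) +
          8 * (⌈l + 1⌉₊)! * t ^ (-(l + 1)) * (HNormC (l + 1) v₀ ^ 2 + HNormC l v₁ ^ 2) := by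
        rw [integral_add (hgauss.const_mul _) (hw.const_mul _), integral_const_mul,
          integral_const_mul, integral_add hv₀ hv₁, sq_HNormC, sq_HNormC]
    _ ≤ 4 * (8 / ζ ^ 2) ^ 2 * (N₀ + N₁) ^ 2 * ((4 * π) ^ ((n : ℝ) / 2) * t ^ (-(l + 1))) +
          8 * (⌈l + 1⌉₊)! * t ^ (-(l + 1)) * (HNormC (l + 1) v₀ ^ 2 + HNormC l v₁ ^ 2) := by
        gcongr; exact integral_exp_neg_mul_sq_norm_le ht hln
    _ = _ := by ring

theorem norm_ftr_le {f : Rn n → ℝ} (hf : Integrable fun x => (1 + ‖x‖) * |f x|) (ξ : Rn n) :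
    ‖ftr f ξ‖ ≤ Norm11 f := by
  calc ‖ftr f ξ‖
      ≤ ∫ x, ‖(f x : ℂ) * Complex.exp (-Complex.I * ((inner ℝ ξ x : ℝ) : ℂ))‖ :=
        norm_integral_le_integral_norm _
    _ = ∫ x, |f x| := by
        congr with x
        rw [norm_mul, Complex.norm_real, norm_eq_abs, Complex.norm_exp]
        simp
    _ ≤ Norm11 f := integral_mono_of_nonneg (ae_of_all _ fun _ => abs_nonneg _) hf
        (ae_of_all _ fun x => le_mul_of_one_le_left (abs_nonneg _) (by simp))

end DampedPlate

theorem stmt_12_general (n : ℕ) (l : ℝ) (hl : 2 ≤ l) (hl2 : l < (n : ℝ) / 2 - 1)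
    (ζ : ℝ) (hζ : zetaCond ζ) :
    ∃ C > (0 : ℝ), ∀ u₀ u₁ : Rn n → ℝ,
      MemH (l + 1) u₀ → MemL11 u₀ → MemH l u₁ → MemL11 u₁ →
      ∀ t : ℝ, 1 ≤ t →
        (∫ ξ : Rn n, ‖uhat ζ u₀ u₁ t ξ‖ ^ 2) ^ ((1 : ℝ) / 2) ≤
          C * I0 l u₀ u₁ * t ^ (-((l + 1) / 2)) := by
  set A := 4 * (8 / ζ ^ 2) ^ 2 * (4 * π) ^ ((n : ℝ) / 2)
  set K : ℝ := ↑(⌈l + 1⌉₊)!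
  refine ⟨√(A + 16 * K), sqrt_pos.2 (by positivity), fun u₀ u₁ h₀ h₀' h₁ h₁' t ht => ?_⟩
  have hI0 : I0 l u₀ u₁ = HNormC l (ftr u₁) + HNormC (l + 1) (ftr u₀) + Norm11 u₁ + Norm11 u₀ :=
    rfl
  have hN₀ : 0 ≤ Norm11 u₀ := integral_nonneg fun _ => by positivity
  have hN₁ : 0 ≤ Norm11 u₁ := integral_nonneg fun _ => by positivity
  have hH₀ : 0 ≤ HNormC (l + 1) (ftr u₀) := rpow_nonneg (integral_nonneg fun _ => by positivity) _
  have hH₁ : 0 ≤ HNormC l (ftr u₁) := rpow_nonneg (integral_nonneg fun _ => by positivity) _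
  refine rpow_one_half_le_of_le_mul_sq_mul_rpow (by rw [hI0]; positivity) (by linarith) ?_
  refine (integral_norm_uhatC_sq_le hζ (by linarith) (by linarith) h₀ h₁ (norm_ftr_le h₀'.2)
    (norm_ftr_le h₁'.2) ht).trans ?_
  have hN : (Norm11 u₀ + Norm11 u₁) ^ 2 ≤ I0 l u₀ u₁ ^ 2 := by gcongr; rw [hI0]; linarith
  have hH₀I : HNormC (l + 1) (ftr u₀) ^ 2 ≤ I0 l u₀ u₁ ^ 2 := by gcongr; rw [hI0]; linarith
  have hH₁I : HNormC l (ftr u₁) ^ 2 ≤ I0 l u₀ u₁ ^ 2 := by gcongr; rw [hI0]; linarith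
  calc _ ≤ (A * I0 l u₀ u₁ ^ 2 + 8 * K * (I0 l u₀ u₁ ^ 2 + I0 l u₀ u₁ ^ 2)) * t ^ (-(l + 1)) := by
        gcongr
    _ = _ := by ring

/-- **Theorem 5.1** (optimal `L²` decay in the wave-like regime `2 ≤ l < n/2 - 1`, `n ≥ 7`). -/
theorem stmt_12 (n : ℕ) (hn : 7 ≤ n) (l : ℝ) (hl : 2 ≤ l) (hl2 : l < (n : ℝ) / 2 - 1)
    (ζ : ℝ) (hζ : zetaCond ζ) :
    ∃ C > (0 : ℝ), ∀ u₀ u₁ : Rn n → ℝ,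
      MemH (l + 1) u₀ → MemL11 u₀ → MemH l u₁ → MemL11 u₁ →
      ∀ t : ℝ, 1 ≤ t →
        (∫ ξ : Rn n, ‖uhat ζ u₀ u₁ t ξ‖ ^ 2) ^ ((1 : ℝ) / 2) ≤
          C * I0 l u₀ u₁ * t ^ (-((l + 1) / 2)) :=
  stmt_12_general n l hl hl2 ζ hζ
end
end

section
/- Let n ≥ 1 be an integer, l ≥ 0 a real number, and u₀ ∈ H^{l+1}(ℝⁿ). Then there exists a constant C > 0, depending only on n and l, such that for all t ≥ 0, ∫_{|ξ| ≥ 1} | û₀(ξ)·( e^{−t/(2(1+|ξ|²))} − e^{−t/(2|ξ|²)} )·cos(t|ξ|) |² dξ ≤ C·‖u₀‖²_{H^{l+1}}·(1+t)^{−l−3}. -/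
open MeasureTheory Real Set

noncomputable section

open DampedPlate

/-!
Since `1 - e^{-x} ≤ x`, the gap between the two damping factors is at most
`(t / (2|ξ|²) - t / (2(1+|ξ|²))) e^{-t/(2(1+|ξ|²))} ≤ s e^{-s/2} / (1+|ξ|²)`,
where `s = t / (1+|ξ|²)`.
As `1 + t ≤ (1+|ξ|²)(1+s)`, the decay `(1+t)^{-l-3}` costs the factor `(1+|ξ|²)^{l+3}`,
which is paid for by the `H^{l+1}` weight and the two powers of `1+|ξ|²` gained above,
while the polynomial factors in `s` are absorbed by `e^{-s}`.
-/

namespace DampedPlate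

variable {n : ℕ}

lemma exp_neg_sub_exp_neg_le (a b : ℝ) : exp (-a) - exp (-b) ≤ (b - a) * exp (-a) := by
  have hsplit : exp (-b) = exp (-a) * exp (-(b - a)) := by rw [← exp_add]; congr 1; ring
  nlinarith [one_sub_le_exp_neg (b - a), exp_pos (-a)]

lemma exists_one_add_rpow_mul_exp_neg_le (k : ℝ) :
    ∃ C > 0, ∀ s : ℝ, 0 ≤ s → (1 + s) ^ k * exp (-s) ≤ C := by
  set m := ⌈k⌉₊
  refine ⟨exp 1 * m.factorial, by positivity, fun s hs => ?_⟩
  have hpow : (1 + s) ^ k ≤ (1 + s) ^ m := by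
    rw [← rpow_natCast]
    exact rpow_le_rpow_of_exponent_le (by linarith) (Nat.le_ceil k)
  have hfact : (1 + s) ^ m ≤ m.factorial * exp (1 + s) := by
    have := pow_div_factorial_le_exp (x := 1 + s) (by linarith) m
    rwa [div_le_iff₀ (by positivity), mul_comm] at this
  calc (1 + s) ^ k * exp (-s) ≤ m.factorial * exp (1 + s) * exp (-s) := by
        gcongr; exact hpow.trans hfact
    _ = exp 1 * m.factorial := by rw [mul_assoc, ← exp_add, add_neg_cancel_right, mul_comm]

lemma exp_damping_gap_le {t r : ℝ} (ht : 0 ≤ t) (hr : 1 ≤ r) :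
    exp (-t / (2 * (1 + r ^ 2))) - exp (-t / (2 * r ^ 2)) ≤
      t / (1 + r ^ 2) / (1 + r ^ 2) * exp (-(t / (1 + r ^ 2)) / 2) := by
  have hr2 : 1 ≤ r ^ 2 := one_le_pow₀ hr
  have hgap : t / (2 * r ^ 2) - t / (2 * (1 + r ^ 2)) ≤ t / (1 + r ^ 2) / (1 + r ^ 2) := by
    rw [div_sub_div _ _ (by positivity) (by positivity), div_div,
      div_le_div_iff₀ (by positivity) (by positivity)]
    have hA : (0 : ℝ) ≤ 1 + r ^ 2 := by positivity
    nlinarith [mul_nonneg ht (mul_nonneg hA (sub_nonneg.2 hr2))]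
  calc exp (-t / (2 * (1 + r ^ 2))) - exp (-t / (2 * r ^ 2))
      = exp (-(t / (2 * (1 + r ^ 2)))) - exp (-(t / (2 * r ^ 2))) := by rw [neg_div, neg_div]
    _ ≤ (t / (2 * r ^ 2) - t / (2 * (1 + r ^ 2))) * exp (-(t / (2 * (1 + r ^ 2)))) :=
        exp_neg_sub_exp_neg_le _ _
    _ ≤ t / (1 + r ^ 2) / (1 + r ^ 2) * exp (-(t / (1 + r ^ 2)) / 2) := by
        rw [show -(t / (2 * (1 + r ^ 2))) = -(t / (1 + r ^ 2)) / 2 by field_simp]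
        gcongr

lemma exists_sq_exp_damping_gap_le {l : ℝ} (hl : -3 ≤ l) :
    ∃ C > 0, ∀ t r : ℝ, 0 ≤ t → 1 ≤ r →
      (exp (-t / (2 * (1 + r ^ 2))) - exp (-t / (2 * r ^ 2))) ^ 2 ≤
        C * (1 + r ^ 2) ^ (l + 1) * (1 + t) ^ (-l - 3) := by
  obtain ⟨C, hC, hdecay⟩ := exists_one_add_rpow_mul_exp_neg_le (l + 5)
  refine ⟨C, hC, fun t r ht hr => ?_⟩
  have hgap := exp_damping_gap_le ht hr
  set A := 1 + r ^ 2
  have hA : 0 < A := by positivity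
  set s := t / A with hs_def
  have hs : 0 ≤ s := by positivity
  have hgap_nonneg : 0 ≤ exp (-t / (2 * A)) - exp (-t / (2 * r ^ 2)) := by
    rw [sub_nonneg, exp_le_exp, neg_div, neg_div, neg_le_neg_iff]
    gcongr
    exact le_add_of_nonneg_left zero_le_one
  have h1t : 1 + t ≤ A * (1 + s) := by
    rw [hs_def, mul_add, mul_div_cancel₀ _ hA.ne']
    linarith [show (1 : ℝ) ≤ A from le_add_of_nonneg_right (sq_nonneg r)]
  have hApow : A ^ (l + 1) * A ^ (-l - 3) = (A ^ 2)⁻¹ := by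
    rw [← rpow_add hA, show l + 1 + (-l - 3) = -((2 : ℕ) : ℝ) by push_cast; ring,
      rpow_neg hA.le, rpow_natCast]
  have hspow : (1 + s) ^ (l + 5) * (1 + s) ^ (-l - 3) = (1 + s) ^ 2 := by
    rw [← rpow_add (by linarith), show l + 5 + (-l - 3) = ((2 : ℕ) : ℝ) by push_cast; ring,
      rpow_natCast]
  have hexp : exp (-s / 2) ^ 2 = exp (-s) := by rw [← exp_nat_mul]; congr 1; push_cast; ring
  calc (exp (-t / (2 * A)) - exp (-t / (2 * r ^ 2))) ^ 2
      ≤ (s / A * exp (-s / 2)) ^ 2 := pow_le_pow_left₀ hgap_nonneg hgap 2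
    _ = s ^ 2 * exp (-s) * (A ^ 2)⁻¹ := by rw [mul_pow, hexp, div_pow, div_eq_mul_inv]; ring
    _ ≤ (1 + s) ^ 2 * exp (-s) * (A ^ 2)⁻¹ := by gcongr; linarith
    _ = (1 + s) ^ (l + 5) * exp (-s) * (1 + s) ^ (-l - 3) * A ^ (-l - 3) * A ^ (l + 1) := by
        rw [← hspow, ← hApow]; ring
    _ ≤ C * (1 + s) ^ (-l - 3) * A ^ (-l - 3) * A ^ (l + 1) := by gcongr; exact hdecay s hs
    _ = C * A ^ (l + 1) * (A * (1 + s)) ^ (-l - 3) := by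
        rw [mul_rpow hA.le (by linarith)]; ring
    _ ≤ C * A ^ (l + 1) * (1 + t) ^ (-l - 3) := by
        refine mul_le_mul_of_nonneg_left ?_ (by positivity)
        exact rpow_le_rpow_of_nonpos (by linarith) h1t (by linarith)

lemma HNormC_sq (s : ℝ) (v : Rn n → ℂ) :
    HNormC s v ^ 2 = ∫ ξ, (1 + ‖ξ‖ ^ 2) ^ s * ‖v ξ‖ ^ 2 := by
  rw [HNormC, ← rpow_natCast, ← rpow_mul (integral_nonneg fun ξ => by positivity)]
  norm_num

lemma setIntegral_norm_mul_sq_le {s K : ℝ} {v : Rn n → ℂ} (hv : MemHC s v) {S : Set (Rn n)}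
    (hS : MeasurableSet S) (hK : 0 ≤ K) {m : Rn n → ℝ}
    (hm : ∀ ξ ∈ S, m ξ ^ 2 ≤ K * (1 + ‖ξ‖ ^ 2) ^ s) :
    ∫ ξ in S, ‖v ξ * (m ξ : ℂ)‖ ^ 2 ≤ K * HNormC s v ^ 2 := by
  have hweighted : Integrable fun ξ => K * ((1 + ‖ξ‖ ^ 2) ^ s * ‖v ξ‖ ^ 2) :=
    hv.const_mul K
  calc ∫ ξ in S, ‖v ξ * (m ξ : ℂ)‖ ^ 2
      ≤ ∫ ξ in S, K * ((1 + ‖ξ‖ ^ 2) ^ s * ‖v ξ‖ ^ 2) := by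
        refine integral_mono_of_nonneg (.of_forall fun ξ => by positivity) hweighted.restrict ?_
        filter_upwards [ae_restrict_mem hS] with ξ hξ
        rw [norm_mul, Complex.norm_real, Real.norm_eq_abs, mul_pow, sq_abs]
        nlinarith [hm ξ hξ, sq_nonneg ‖v ξ‖]
    _ ≤ ∫ ξ, K * ((1 + ‖ξ‖ ^ 2) ^ s * ‖v ξ‖ ^ 2) :=
        setIntegral_le_integral hweighted (.of_forall fun ξ => by positivity)
    _ = K * HNormC s v ^ 2 := by rw [integral_const_mul, HNormC_sq]

end DampedPlate

theorem stmt_15_general (n : ℕ) (l : ℝ) (hl : 0 ≤ l) :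
    ∃ C > (0 : ℝ), ∀ v₀ : Rn n → ℂ, MemHC (l + 1) v₀ →
      ∀ t : ℝ, 0 ≤ t →
        (∫ ξ in {ξ : Rn n | 1 ≤ ‖ξ‖},
            ‖v₀ ξ * (((Real.exp (-t / (2 * (1 + ‖ξ‖ ^ 2))) - Real.exp (-t / (2 * ‖ξ‖ ^ 2))) *
              Real.cos (t * ‖ξ‖) : ℝ) : ℂ)‖ ^ 2) ≤
          C * HNormC (l + 1) v₀ ^ 2 * (1 + t) ^ (-l - 3) := by
  obtain ⟨C, hC, hgap⟩ := exists_sq_exp_damping_gap_le (by linarith : -3 ≤ l)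
  refine ⟨C, hC, fun v₀ hv t ht => ?_⟩
  have hS : MeasurableSet {ξ : Rn n | 1 ≤ ‖ξ‖} := measurableSet_le measurable_const measurable_norm
  calc _ ≤ C * (1 + t) ^ (-l - 3) * HNormC (l + 1) v₀ ^ 2 := by
        refine setIntegral_norm_mul_sq_le hv hS (by positivity) fun ξ hξ => ?_
        rw [mul_pow]
        calc _ ≤ (exp (-t / (2 * (1 + ‖ξ‖ ^ 2))) - exp (-t / (2 * ‖ξ‖ ^ 2))) ^ 2 :=
              mul_le_of_le_one_right (sq_nonneg _) (cos_sq_le_one _)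
          _ ≤ _ := hgap t ‖ξ‖ ht hξ
          _ = _ := by ring
    _ = _ := by ring

/-- High-frequency estimate for the second term in the proof of Lemma 4.1.
Stated on the Fourier side: `v₀ = û₀ ∈ H^{l+1}`. -/
theorem stmt_15 (n : ℕ) (hn : 1 ≤ n) (l : ℝ) (hl : 0 ≤ l) :
    ∃ C > (0 : ℝ), ∀ v₀ : Rn n → ℂ, MemHC (l + 1) v₀ →
      ∀ t : ℝ, 0 ≤ t →
        (∫ ξ in {ξ : Rn n | 1 ≤ ‖ξ‖},
            ‖v₀ ξ * (((Real.exp (-t / (2 * (1 + ‖ξ‖ ^ 2))) - Real.exp (-t / (2 * ‖ξ‖ ^ 2))) *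
              Real.cos (t * ‖ξ‖) : ℝ) : ℂ)‖ ^ 2) ≤
          C * HNormC (l + 1) v₀ ^ 2 * (1 + t) ^ (-l - 3) :=
  stmt_15_general n l hl
end
end
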